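/- There exist constants C₁, C₂ > 0 and ε₀ > 0 such that for all ε ∈ (0, ε₀): C₁ ≤ ε·|ln ε|·sup{ |q_h(ξ,θ)| : ξ ∈ [−ξ₁, ξ₂], θ ∈ [0,π] } ≤ C₂. -/

import Mathlib

open Real

noncomputable section

/-- The distance parameter `a_ε`. -/
def aEps (r₁ r₂ ε : ℝ) : ℝ :=
  Real.sqrt ε * Real.sqrt ((2*r₁+ε)*(2*r₂+ε)*(2*r₁+2*r₂+ε)) / (2*(r₁+r₂+ε))

def xi (r : ℝ) (r₁ r₂ ε : ℝ) : ℝ := Real.arsinh (aEps r₁ r₂ ε / r)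

def sZero (r₁ r₂ ε : ℝ) : ℝ := xi r₁ r₁ r₂ ε + xi r₂ r₁ r₂ ε

/-- `w θ ξ = √(cosh ξ − cos θ)`. -/
def w (θ ξ : ℝ) : ℝ := Real.sqrt (Real.cosh ξ - Real.cos θ)

/-- The digamma value `ψ₀(z) = −γ + ∑_{k≥0} (z−1)/((k+1)(k+z))`. -/
def digammaVal (z : ℝ) : ℝ :=
  -Real.eulerMascheroniConstant + ∑' k : ℕ, (z - 1) / ((k + 1) * (k + z))

def rTilde (r₁ r₂ : ℝ) : ℝ := r₁ * r₂ / (r₁ + r₂)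

/-- `μ_j` for `j = 1, 2`. -/
def muConst (r₁ r₂ : ℝ) (j : ℕ) : ℝ :=
  (digammaVal ((if j = 1 then r₁ else r₂) / (r₁ + r₂)) + Real.eulerMascheroniConstant) /
    (digammaVal (r₁ / (r₁ + r₂)) + digammaVal (r₂ / (r₁ + r₂)) +
      2 * Real.eulerMascheroniConstant)

/-- `μ_ε`. -/
def muEps (r₁ r₂ ε : ℝ) : ℝ :=
  (1 / (2 * Real.pi * rTilde r₁ r₂)) *
    (|Real.log ε| + Real.log (rTilde r₁ r₂) + Real.log 2 -
      2 * (digammaVal (r₁ / (r₁ + r₂)) * digammaVal (r₂ / (r₁ + r₂)) -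
          Real.eulerMascheroniConstant ^ 2) /
        (digammaVal (r₁ / (r₁ + r₂)) + digammaVal (r₂ / (r₁ + r₂)) +
          2 * Real.eulerMascheroniConstant))⁻¹

/-- `𝓘₁(ξ,θ;c) = (1/(2 a_ε s₀)) · w_θ(ξ)³ / w_θ(ξ−c)`. -/
def I1 (r₁ r₂ ε ξ θ c : ℝ) : ℝ :=
  (1 / (2 * aEps r₁ r₂ ε * sZero r₁ r₂ ε)) * w θ ξ ^ 3 / w θ (ξ - c)

/-- The blow-up factor `q_h(ξ,θ)`. -/
def qh (r₁ r₂ ε ξ θ : ℝ) : ℝ :=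
  muEps r₁ r₂ ε * muConst r₁ r₂ 1 *
      (I1 r₁ r₂ ε (-ξ) θ (2 * xi r₁ r₁ r₂ ε) +
        I1 r₁ r₂ ε ξ θ (2 * xi r₁ r₁ r₂ ε + 2 * xi r₂ r₁ r₂ ε)) +
    muEps r₁ r₂ ε * muConst r₁ r₂ 2 *
      (I1 r₁ r₂ ε ξ θ (2 * xi r₂ r₁ r₂ ε) +
        I1 r₁ r₂ ε (-ξ) θ (2 * xi r₁ r₁ r₂ ε + 2 * xi r₂ r₁ r₂ ε))

/-!
Each `𝓘₁` in `q_h` is `(2 a_ε s₀)⁻¹` times a ratio `w_θ(x)³ / w_θ(x - c)`. On the domain the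
shift `c` is at least `2x`, so `|x| ≤ |x - c|` and the ratio is at most `w_θ(x)² ≤ 4`; at
`(ξ, θ) = (0, π)` it equals `√8 / √(cosh c + 1) ≥ 1`. Since `ψ₀ + γ < 0` on `(0, 1)`, the
weights `μ₁, μ₂` are positive with sum `1`, so `sup |q_h|` lies between `2` and `8` times
`μ_ε / (2 a_ε s₀)`. Finally `a_ε² ~ 2 r̃ ε`, `s₀ ~ a_ε / r̃` (as `arsinh t ~ t`) and
`μ_ε ~ 1 / (2π r̃ |ln ε|)`, so `ε |ln ε| μ_ε / (2 a_ε s₀) → 1 / (8π r̃) > 0`.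
-/

open Filter Topology Set

lemma tendsto_arsinh_div_self : Tendsto (fun t => arsinh t / t) (𝓝[≠] 0) (𝓝 1) := by
  have h := (hasDerivAt_arsinh 0).tendsto_slope_zero
  simp only [zero_add, arsinh_zero, sub_zero, smul_eq_mul, ne_eq, OfNat.ofNat_ne_zero,
    not_false_eq_true, zero_pow, add_zero, sqrt_one, inv_one] at h
  simpa only [div_eq_inv_mul] using h

lemma tendsto_mul_inv_add_const_atTop (K : ℝ) :
    Tendsto (fun x : ℝ => x * (x + K)⁻¹) atTop (𝓝 1) := by
  have h : Tendsto (fun x : ℝ => (1 + K / x)⁻¹) atTop (𝓝 (1 + 0)⁻¹) :=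
    ((tendsto_const_nhds.div_atTop tendsto_id).const_add 1).inv₀ (by norm_num)
  rw [add_zero, inv_one] at h
  refine h.congr' ?_
  filter_upwards [eventually_ne_atTop 0] with x hx
  field_simp

lemma tendsto_nhdsGT_zero_of_continuous {f : ℝ → ℝ} (hf : Continuous f) (h0 : f 0 = 0)
    (hpos : ∀ x, 0 < x → 0 < f x) : Tendsto f (𝓝[>] 0) (𝓝[>] 0) := by
  have h : Tendsto f (𝓝[>] 0) (𝓝[>] (f 0)) :=
    hf.continuousWithinAt.tendsto_nhdsWithin fun x hx => by simpa [h0] using hpos x hx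
  rwa [h0] at h

lemma tendsto_div_const_nhdsGT_zero {r : ℝ} (hr : 0 < r) :
    Tendsto (fun x : ℝ => x / r) (𝓝[>] 0) (𝓝[>] 0) :=
  tendsto_nhdsGT_zero_of_continuous (continuous_id.div_const r) (zero_div r)
    fun _ hx => div_pos hx hr

lemma cosh_le_three {x : ℝ} (hx : |x| ≤ 1) : cosh x ≤ 3 := by
  have h1 : cosh x ≤ cosh 1 := cosh_le_cosh.2 (by rwa [abs_one])
  have h2 : exp (-1) ≤ 1 := exp_le_one_iff.2 (by norm_num)
  linarith [cosh_eq 1, exp_one_lt_d9]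

lemma mul_add_add_mul_add_mem_Icc {p q a b c d lo hi : ℝ} (hp : 0 ≤ p) (hq : 0 ≤ q)
    (hpq : p + q = 1)
    (ha : a ∈ Icc lo hi) (hb : b ∈ Icc lo hi) (hc : c ∈ Icc lo hi) (hd : d ∈ Icc lo hi) :
    p * (a + b) + q * (c + d) ∈ Icc (2 * lo) (2 * hi) := by
  obtain rfl : q = 1 - p := by linarith
  obtain ⟨ha₁, ha₂⟩ := ha; obtain ⟨hb₁, hb₂⟩ := hb
  obtain ⟨hc₁, hc₂⟩ := hc; obtain ⟨hd₁, hd₂⟩ := hd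
  constructor
  · nlinarith [mul_nonneg hp (by linarith : 0 ≤ a + b - 2 * lo),
      mul_nonneg hq (by linarith : 0 ≤ c + d - 2 * lo)]
  · nlinarith [mul_nonneg hp (by linarith : 0 ≤ 2 * hi - a - b),
      mul_nonneg hq (by linarith : 0 ≤ 2 * hi - c - d)]

lemma summable_digamma_terms {z : ℝ} (hz0 : 0 < z) (hz1 : z ≤ 1) :
    Summable fun k : ℕ => (z - 1) / (((k : ℝ) + 1) * ((k : ℝ) + z)) := by
  have hsq : Summable fun k : ℕ => 1 / ((k : ℝ) + 1) ^ 2 := by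
    simpa using (summable_nat_add_iff 1).2 (summable_one_div_nat_pow.2 one_lt_two)
  refine (hsq.mul_left ((1 - z) / z)).of_norm_bounded fun k => ?_
  have hk : (0 : ℝ) ≤ k := k.cast_nonneg
  rw [Real.norm_eq_abs, abs_div, abs_of_nonpos (by linarith), abs_of_pos (by positivity),
    mul_one_div, div_div, neg_sub]
  exact div_le_div_of_nonneg_left (by linarith) (by positivity)
    (by nlinarith [mul_nonneg (mul_nonneg hk (by linarith : (0 : ℝ) ≤ k + 1)) (sub_nonneg.2 hz1)])

lemma digammaVal_add_eulerMascheroniConstant_neg {z : ℝ} (hz0 : 0 < z) (hz1 : z < 1) :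
    digammaVal z + eulerMascheroniConstant < 0 := by
  have h : ∑' k : ℕ, (z - 1) / (((k : ℝ) + 1) * ((k : ℝ) + z)) < ∑' _ : ℕ, (0 : ℝ) :=
    Summable.tsum_lt_tsum (i := 0)
      (fun k => div_nonpos_of_nonpos_of_nonneg (by linarith) (by positivity))
      (div_neg_of_neg_of_pos (by linarith) (by positivity)) (summable_digamma_terms hz0 hz1.le)
      summable_zero
  rw [tsum_zero] at h
  rw [digammaVal]
  linarith

lemma digammaVal_div_add_eulerMascheroniConstant_neg {a b : ℝ} (ha : 0 < a) (hb : 0 < b) :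
    digammaVal (a / (a + b)) + eulerMascheroniConstant < 0 ∧
      digammaVal (b / (a + b)) + eulerMascheroniConstant < 0 :=
  ⟨digammaVal_add_eulerMascheroniConstant_neg (by positivity)
      ((div_lt_one (by positivity)).2 (by linarith)),
    digammaVal_add_eulerMascheroniConstant_neg (by positivity)
      ((div_lt_one (by positivity)).2 (by linarith))⟩

lemma muConst_pos {r₁ r₂ : ℝ} (hr₁ : 0 < r₁) (hr₂ : 0 < r₂) (j : ℕ) : 0 < muConst r₁ r₂ j := by
  obtain ⟨h₁, h₂⟩ := digammaVal_div_add_eulerMascheroniConstant_neg hr₁ hr₂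
  unfold muConst
  split_ifs <;> exact div_pos_of_neg_of_neg (by linarith) (by linarith)

lemma muConst_one_add_muConst_two {r₁ r₂ : ℝ} (hr₁ : 0 < r₁) (hr₂ : 0 < r₂) :
    muConst r₁ r₂ 1 + muConst r₁ r₂ 2 = 1 := by
  obtain ⟨h₁, h₂⟩ := digammaVal_div_add_eulerMascheroniConstant_neg hr₁ hr₂
  rw [muConst, muConst, if_pos rfl, if_neg (by norm_num), ← add_div,
    div_eq_one_iff_eq (by linarith)]
  ring

lemma w_sq (θ x : ℝ) : w θ x ^ 2 = cosh x - cos θ :=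
  sq_sqrt (sub_nonneg.2 ((cos_le_one θ).trans (one_le_cosh x)))

def kernelRatio (θ x c : ℝ) : ℝ := w θ x ^ 3 / w θ (x - c)

lemma kernelRatio_mem_Icc {θ x c : ℝ} (hx : |x| ≤ 1) (hc : 0 ≤ c) (hxc : 2 * x ≤ c) :
    kernelRatio θ x c ∈ Icc 0 4 := by
  have habs : |x| ≤ |x - c| := by
    rw [abs_sub_comm, abs_of_nonneg (by linarith : 0 ≤ c - x)]
    exact abs_le.2 ⟨by linarith, by linarith⟩
  have hw : w θ x ≤ w θ (x - c) := sqrt_le_sqrt (by linarith [cosh_le_cosh.2 habs])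
  have hle : kernelRatio θ x c ≤ w θ x ^ 2 :=
    div_le_of_le_mul₀ (sqrt_nonneg _) (sq_nonneg _)
      (by rw [pow_succ]; exact mul_le_mul_of_nonneg_left hw (sq_nonneg _))
  refine ⟨div_nonneg (pow_nonneg (sqrt_nonneg _) 3) (sqrt_nonneg _), hle.trans ?_⟩
  rw [w_sq]
  linarith [cosh_le_three hx, neg_one_le_cos θ]

lemma kernelRatio_pi_zero_mem_Icc {c : ℝ} (hc₀ : 0 ≤ c) (hc₁ : c ≤ 1) :
    kernelRatio π 0 c ∈ Icc 1 4 := by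
  refine ⟨?_, (kernelRatio_mem_Icc (by simp) hc₀ (by linarith)).2⟩
  have hc : |c| ≤ 1 := abs_le.2 ⟨by linarith, hc₁⟩
  have hu : w π 0 ^ 2 = 2 := by rw [w_sq, cosh_zero, cos_pi]; norm_num
  have hv : w π (0 - c) ^ 2 ≤ 4 := by
    rw [w_sq, zero_sub, cosh_neg, cos_pi]; linarith [cosh_le_three hc]
  have hv0 : 0 < w π (0 - c) :=
    sqrt_pos.2 (by rw [zero_sub, cosh_neg, cos_pi]; linarith [one_le_cosh c])
  have hu0 : 0 ≤ w π 0 := sqrt_nonneg _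
  have hu1 : 1 ≤ w π 0 := by nlinarith
  have hv2 : w π (0 - c) ≤ 2 := by nlinarith
  rw [kernelRatio, one_le_div hv0]
  nlinarith

def qhScale (r₁ r₂ ε : ℝ) : ℝ := muEps r₁ r₂ ε / (2 * aEps r₁ r₂ ε * sZero r₁ r₂ ε)

lemma sSup_abs_mem_Icc {f : ℝ → ℝ → ℝ} {A B : Set ℝ} {lo hi : ℝ}
    (hhi : ∀ ξ ∈ A, ∀ θ ∈ B, |f ξ θ| ≤ hi) {ξ₀ θ₀ : ℝ} (hξ₀ : ξ₀ ∈ A) (hθ₀ : θ₀ ∈ B)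
    (hlo : lo ≤ |f ξ₀ θ₀|) :
    sSup {y : ℝ | ∃ ξ ∈ A, ∃ θ ∈ B, y = |f ξ θ|} ∈ Icc lo hi := by
  have hub : ∀ y ∈ {y : ℝ | ∃ ξ ∈ A, ∃ θ ∈ B, y = |f ξ θ|}, y ≤ hi := by
    rintro y ⟨ξ, hξ, θ, hθ, rfl⟩
    exact hhi ξ hξ θ hθ
  exact ⟨hlo.trans (le_csSup ⟨hi, hub⟩ ⟨ξ₀, hξ₀, θ₀, hθ₀, rfl⟩),
    Real.sSup_le hub ((abs_nonneg _).trans (hhi ξ₀ hξ₀ θ₀ hθ₀))⟩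

section Asymptotics

variable {r₁ r₂ ε : ℝ}

lemma aEps_pos (hr₁ : 0 < r₁) (hr₂ : 0 < r₂) (hε : 0 < ε) : 0 < aEps r₁ r₂ ε := by
  unfold aEps; positivity

lemma xi_pos (hr₁ : 0 < r₁) (hr₂ : 0 < r₂) (hε : 0 < ε) {r : ℝ} (hr : 0 < r) :
    0 < xi r r₁ r₂ ε :=
  arsinh_pos_iff.2 (div_pos (aEps_pos hr₁ hr₂ hε) hr)

lemma aEps_sq (hr₁ : 0 < r₁) (hr₂ : 0 < r₂) (hε : 0 ≤ ε) :
    aEps r₁ r₂ ε ^ 2 = ε * ((2 * r₁ + ε) * (2 * r₂ + ε) * (2 * r₁ + 2 * r₂ + ε)) /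
      (4 * (r₁ + r₂ + ε) ^ 2) := by
  unfold aEps
  rw [div_pow, mul_pow, sq_sqrt hε, sq_sqrt (by positivity)]
  ring

lemma tendsto_aEps_sq_div_self (hr₁ : 0 < r₁) (hr₂ : 0 < r₂) :
    Tendsto (fun ε => aEps r₁ r₂ ε ^ 2 / ε) (𝓝[>] 0) (𝓝 (2 * rTilde r₁ r₂)) := by
  have hcont : ContinuousAt
      (fun ε => (2 * r₁ + ε) * (2 * r₂ + ε) * (2 * r₁ + 2 * r₂ + ε) / (4 * (r₁ + r₂ + ε) ^ 2)) 0 :=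
    ContinuousAt.div (by fun_prop) (by fun_prop) (by positivity)
  have hlim := hcont.tendsto.mono_left (nhdsWithin_le_nhds (s := Ioi 0))
  convert hlim.congr' ?_ using 2
  · unfold rTilde; field_simp; ring
  · filter_upwards [self_mem_nhdsWithin] with ε (hε : 0 < ε)
    rw [aEps_sq hr₁ hr₂ hε.le]
    field_simp

lemma tendsto_aEps (hr₁ : 0 < r₁) (hr₂ : 0 < r₂) : Tendsto (aEps r₁ r₂) (𝓝[>] 0) (𝓝[>] 0) := by
  refine tendsto_nhdsWithin_iff.2
    ⟨?_, eventually_nhdsWithin_of_forall fun ε hε => aEps_pos hr₁ hr₂ hε⟩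
  have hcont : ContinuousAt (aEps r₁ r₂) 0 := by
    unfold aEps
    exact ContinuousAt.div (by fun_prop) (by fun_prop) (by positivity)
  simpa [aEps] using hcont.tendsto.mono_left (nhdsWithin_le_nhds (s := Ioi 0))

lemma tendsto_xi (hr₁ : 0 < r₁) (hr₂ : 0 < r₂) {r : ℝ} (hr : 0 < r) :
    Tendsto (xi r r₁ r₂) (𝓝[>] 0) (𝓝[>] 0) :=
  (tendsto_nhdsGT_zero_of_continuous continuous_arsinh arsinh_zero fun _ => arsinh_pos_iff.2).comp
    ((tendsto_div_const_nhdsGT_zero hr).comp (tendsto_aEps hr₁ hr₂))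

lemma tendsto_xi_div_aEps (hr₁ : 0 < r₁) (hr₂ : 0 < r₂) {r : ℝ} (hr : 0 < r) :
    Tendsto (fun ε => xi r r₁ r₂ ε / aEps r₁ r₂ ε) (𝓝[>] 0) (𝓝 r⁻¹) := by
  have hdiv : Tendsto (fun ε => aEps r₁ r₂ ε / r) (𝓝[>] 0) (𝓝[≠] 0) :=
    ((tendsto_div_const_nhdsGT_zero hr).comp (tendsto_aEps hr₁ hr₂)).mono_right
      (nhdsWithin_mono 0 fun _ hx => ne_of_gt hx)
  have h := (tendsto_arsinh_div_self.comp hdiv).mul_const r⁻¹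
  rw [one_mul] at h
  refine h.congr fun ε => ?_
  simp only [Function.comp_apply, xi]
  field_simp

lemma tendsto_sZero_div_aEps (hr₁ : 0 < r₁) (hr₂ : 0 < r₂) :
    Tendsto (fun ε => sZero r₁ r₂ ε / aEps r₁ r₂ ε) (𝓝[>] 0) (𝓝 (rTilde r₁ r₂)⁻¹) := by
  have h := (tendsto_xi_div_aEps hr₁ hr₂ hr₁).add (tendsto_xi_div_aEps hr₁ hr₂ hr₂)
  convert h using 2 with ε
  · exact add_div _ _ _
  · unfold rTilde; field_simp; ring

lemma tendsto_self_div_two_mul_aEps_mul_sZero (hr₁ : 0 < r₁) (hr₂ : 0 < r₂) :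
    Tendsto (fun ε => ε / (2 * aEps r₁ r₂ ε * sZero r₁ r₂ ε)) (𝓝[>] 0) (𝓝 4⁻¹) := by
  have hr : 0 < rTilde r₁ r₂ := by unfold rTilde; positivity
  have h := ((tendsto_aEps_sq_div_self hr₁ hr₂).mul (tendsto_sZero_div_aEps hr₁ hr₂)).const_mul 2
  have h4 : 2 * (2 * rTilde r₁ r₂ * (rTilde r₁ r₂)⁻¹) = 4 := by field_simp; norm_num
  rw [h4] at h
  refine (h.inv₀ (by norm_num)).congr' ?_
  filter_upwards [self_mem_nhdsWithin] with ε (hε : 0 < ε)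
  have ha := aEps_pos hr₁ hr₂ hε
  field_simp

lemma tendsto_abs_log_mul_muEps (r₁ r₂ : ℝ) :
    Tendsto (fun ε => |log ε| * muEps r₁ r₂ ε) (𝓝[>] 0)
      (𝓝 (1 / (2 * π * rTilde r₁ r₂))) := by
  have hlog : Tendsto (fun ε => |log ε|) (𝓝[>] 0) atTop :=
    tendsto_abs_atBot_atTop.comp tendsto_log_nhdsGT_zero
  obtain ⟨K, hK⟩ : ∃ K, ∀ ε, muEps r₁ r₂ ε = 1 / (2 * π * rTilde r₁ r₂) * (|log ε| + K)⁻¹ :=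
    ⟨_, fun ε => by rw [muEps, add_sub_assoc, add_assoc]⟩
  have h := ((tendsto_mul_inv_add_const_atTop K).comp hlog).const_mul (1 / (2 * π * rTilde r₁ r₂))
  rw [mul_one] at h
  refine h.congr fun ε => ?_
  rw [hK, Function.comp_apply]
  ring

lemma tendsto_blowup_rate (hr₁ : 0 < r₁) (hr₂ : 0 < r₂) :
    Tendsto (fun ε => ε * |log ε| * qhScale r₁ r₂ ε)
      (𝓝[>] 0) (𝓝 (1 / (2 * π * rTilde r₁ r₂) * 4⁻¹)) :=
  ((tendsto_abs_log_mul_muEps r₁ r₂).mul (tendsto_self_div_two_mul_aEps_mul_sZero hr₁ hr₂)).congr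
    fun ε => by rw [qhScale]; ring

end Asymptotics

section BlowupFactor

variable {r₁ r₂ ε : ℝ}

lemma qh_eq (ξ θ : ℝ) :
    qh r₁ r₂ ε ξ θ = qhScale r₁ r₂ ε *
      (muConst r₁ r₂ 1 * (kernelRatio θ (-ξ) (2 * xi r₁ r₁ r₂ ε) +
          kernelRatio θ ξ (2 * xi r₁ r₁ r₂ ε + 2 * xi r₂ r₁ r₂ ε)) +
        muConst r₁ r₂ 2 * (kernelRatio θ ξ (2 * xi r₂ r₁ r₂ ε) +
          kernelRatio θ (-ξ) (2 * xi r₁ r₁ r₂ ε + 2 * xi r₂ r₁ r₂ ε))) := by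
  simp only [qh, I1, kernelRatio, qhScale]
  ring

lemma qhScale_nonneg (hr₁ : 0 < r₁) (hr₂ : 0 < r₂) (hε : 0 < ε) (hμ : 0 ≤ muEps r₁ r₂ ε) :
    0 ≤ qhScale r₁ r₂ ε := by
  have := aEps_pos hr₁ hr₂ hε
  have := xi_pos hr₁ hr₂ hε hr₁
  have := xi_pos hr₁ hr₂ hε hr₂
  exact div_nonneg hμ (by unfold sZero; positivity)

lemma qh_mem_Icc (hr₁ : 0 < r₁) (hr₂ : 0 < r₂) (hε : 0 < ε) (hμ : 0 ≤ muEps r₁ r₂ ε)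
    (hξ : xi r₁ r₁ r₂ ε + xi r₂ r₁ r₂ ε ≤ 1 / 2) {ξ : ℝ}
    (hξ' : ξ ∈ Icc (-xi r₁ r₁ r₂ ε) (xi r₂ r₁ r₂ ε)) (θ : ℝ) :
    qh r₁ r₂ ε ξ θ ∈ Icc 0 (8 * qhScale r₁ r₂ ε) := by
  have hξ₁ := xi_pos hr₁ hr₂ hε hr₁
  have hξ₂ := xi_pos hr₁ hr₂ hε hr₂
  have hx : |ξ| ≤ 1 := abs_le.2 ⟨by linarith [hξ'.1], by linarith [hξ'.2]⟩
  have hx' : |-ξ| ≤ 1 := by rwa [abs_neg]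
  have hQ := qhScale_nonneg hr₁ hr₂ hε hμ
  rw [qh_eq]
  set x₁ := xi r₁ r₁ r₂ ε
  set x₂ := xi r₂ r₁ r₂ ε
  have hB := mul_add_add_mul_add_mem_Icc (muConst_pos hr₁ hr₂ 1).le (muConst_pos hr₁ hr₂ 2).le
    (muConst_one_add_muConst_two hr₁ hr₂)
    (kernelRatio_mem_Icc (θ := θ) (c := 2 * x₁) hx' (by linarith) (by linarith [hξ'.1]))
    (kernelRatio_mem_Icc (θ := θ) (c := 2 * x₁ + 2 * x₂) hx (by linarith) (by linarith [hξ'.2]))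
    (kernelRatio_mem_Icc (θ := θ) (c := 2 * x₂) hx (by linarith) (by linarith [hξ'.2]))
    (kernelRatio_mem_Icc (θ := θ) (c := 2 * x₁ + 2 * x₂) hx' (by linarith) (by linarith [hξ'.1]))
  exact ⟨mul_nonneg hQ (by linarith [hB.1]), by nlinarith [hB.2]⟩

lemma two_mul_le_qh_zero_pi (hr₁ : 0 < r₁) (hr₂ : 0 < r₂) (hε : 0 < ε)
    (hμ : 0 ≤ muEps r₁ r₂ ε) (hξ : xi r₁ r₁ r₂ ε + xi r₂ r₁ r₂ ε ≤ 1 / 2) :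
    2 * qhScale r₁ r₂ ε ≤ qh r₁ r₂ ε 0 π := by
  have hξ₁ := xi_pos hr₁ hr₂ hε hr₁
  have hξ₂ := xi_pos hr₁ hr₂ hε hr₂
  have hQ := qhScale_nonneg hr₁ hr₂ hε hμ
  rw [qh_eq, neg_zero]
  set x₁ := xi r₁ r₁ r₂ ε
  set x₂ := xi r₂ r₁ r₂ ε
  have hB := mul_add_add_mul_add_mem_Icc (muConst_pos hr₁ hr₂ 1).le (muConst_pos hr₁ hr₂ 2).le
    (muConst_one_add_muConst_two hr₁ hr₂)
    (kernelRatio_pi_zero_mem_Icc (c := 2 * x₁) (by linarith) (by linarith))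
    (kernelRatio_pi_zero_mem_Icc (c := 2 * x₁ + 2 * x₂) (by linarith) (by linarith))
    (kernelRatio_pi_zero_mem_Icc (c := 2 * x₂) (by linarith) (by linarith))
    (kernelRatio_pi_zero_mem_Icc (c := 2 * x₁ + 2 * x₂) (by linarith) (by linarith))
  nlinarith [hB.1]

lemma sSup_abs_qh_mem_Icc (hr₁ : 0 < r₁) (hr₂ : 0 < r₂) (hε : 0 < ε)
    (hμ : 0 ≤ muEps r₁ r₂ ε) (hξ : xi r₁ r₁ r₂ ε + xi r₂ r₁ r₂ ε ≤ 1 / 2) :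
    sSup {y : ℝ | ∃ ξ ∈ Icc (-(xi r₁ r₁ r₂ ε)) (xi r₂ r₁ r₂ ε),
        ∃ θ ∈ Icc 0 π, y = |qh r₁ r₂ ε ξ θ|} ∈ Icc (2 * qhScale r₁ r₂ ε) (8 * qhScale r₁ r₂ ε) := by
  have hξ₁ := xi_pos hr₁ hr₂ hε hr₁
  have hξ₂ := xi_pos hr₁ hr₂ hε hr₂
  refine sSup_abs_mem_Icc (fun ξ hξ' θ _ => ?_) (ξ₀ := 0) ⟨by linarith, by linarith⟩
    (θ₀ := π) ⟨pi_pos.le, le_rfl⟩ ((two_mul_le_qh_zero_pi hr₁ hr₂ hε hμ hξ).trans (le_abs_self _))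
  have h := qh_mem_Icc hr₁ hr₂ hε hμ hξ hξ' θ
  rw [abs_of_nonneg h.1]
  exact h.2

end BlowupFactor

theorem stmt13 (r₁ r₂ : ℝ) (hr₁ : 0 < r₁) (hr₂ : 0 < r₂) :
    ∃ C₁ > 0, ∃ C₂ > 0, ∃ ε₀ > 0, ∀ ε ∈ Set.Ioo 0 ε₀,
      C₁ ≤ ε * |Real.log ε| *
          sSup {y : ℝ | ∃ ξ ∈ Set.Icc (-(xi r₁ r₁ r₂ ε)) (xi r₂ r₁ r₂ ε),
            ∃ θ ∈ Set.Icc 0 Real.pi, y = |qh r₁ r₂ ε ξ θ|} ∧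
      ε * |Real.log ε| *
          sSup {y : ℝ | ∃ ξ ∈ Set.Icc (-(xi r₁ r₁ r₂ ε)) (xi r₂ r₁ r₂ ε),
            ∃ θ ∈ Set.Icc 0 Real.pi, y = |qh r₁ r₂ ε ξ θ|} ≤ C₂ := by
  have hL := tendsto_blowup_rate hr₁ hr₂
  set ℓ := 1 / (2 * π * rTilde r₁ r₂) * 4⁻¹
  have hℓ : 0 < ℓ := by unfold ℓ rTilde; positivity
  have hsmall : ∀ᶠ ε in 𝓝[>] 0,
      (ℓ / 2 < ε * |log ε| * qhScale r₁ r₂ ε ∧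
        ε * |log ε| * qhScale r₁ r₂ ε < 2 * ℓ) ∧
      0 < |log ε| * muEps r₁ r₂ ε ∧ xi r₁ r₁ r₂ ε < 1 / 4 ∧ xi r₂ r₁ r₂ ε < 1 / 4 :=
    (hL.eventually_const_lt (half_lt_self hℓ)).and (hL.eventually_lt_const (lt_two_mul_self hℓ))
      |>.and <|
    ((tendsto_abs_log_mul_muEps r₁ r₂).eventually_const_lt (by unfold rTilde; positivity)).and <|
    (((tendsto_xi hr₁ hr₂ hr₁).mono_right nhdsWithin_le_nhds).eventually_lt_const (by norm_num)).and
      (((tendsto_xi hr₁ hr₂ hr₂).mono_right nhdsWithin_le_nhds).eventually_lt_const (by norm_num))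
  obtain ⟨ε₀, hε₀, h⟩ := (nhdsGT_basis 0).eventually_iff.1 hsmall
  refine ⟨ℓ, hℓ, 16 * ℓ, by positivity, ε₀, hε₀, fun ε hε => ?_⟩
  obtain ⟨⟨hlo, hhi⟩, hμ, hξ₁, hξ₂⟩ := h hε
  have hS := sSup_abs_qh_mem_Icc hr₁ hr₂ hε.1 (pos_of_mul_pos_right hμ (abs_nonneg _)).le
    (by linarith)
  have hscale : 0 ≤ ε * |log ε| := mul_nonneg hε.1.le (abs_nonneg _)
  constructor
  · nlinarith [mul_le_mul_of_nonneg_left hS.1 hscale]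
  · nlinarith [mul_le_mul_of_nonneg_left hS.2 hscale]

end
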